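/- For every configuration σ and every spin i ∈ V: if σ(i) = 1, then i is susceptible in σ (i.e. H(σ^i) ≤ H(σ)) if and only if at least 3 of the four nearest neighbors j of i have σ(j) = -1; and if σ(i) = -1, then i is susceptible in σ if and only if at least 2 of the four nearest neighbors j of i have σ(j) = 1. -/
import Mathlib


open Filter Topology

set_option linter.unusedSectionVars false
set_option linter.unusedVariables false
set_option linter.unreachableTactic false
set_option linter.unusedTactic false

namespace IsingS

variable (N : ℕ) [NeZero N]

/-- Vertex set: the N×N discrete torus. -/
abbrev V := ZMod N × ZMod N

/-- Configurations: `true` encodes spin +1, `false` encodes spin -1. -/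
abbrev Cfg := V N → Bool

/-- The spin value in ℤ of a Boolean spin. -/
def spin (b : Bool) : ℤ := if b then 1 else -1

/-- The four nearest neighbors of a vertex. -/
def nbrFinset (i : V N) : Finset (V N) :=
  {i + ((1 : ZMod N), (0 : ZMod N)), i + ((-1 : ZMod N), (0 : ZMod N)),
   i + ((0 : ZMod N), (1 : ZMod N)), i + ((0 : ZMod N), (-1 : ZMod N))}

/-- The Hamiltonian with external magnetic field `h`. -/
noncomputable def H (h : ℝ) (σ : Cfg N) : ℝ :=
  -(1/2) * (((∑ i : V N, ∑ j ∈ nbrFinset N i, spin (σ i) * spin (σ j)) : ℤ) : ℝ)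
    - h * (((∑ i : V N, spin (σ i)) : ℤ) : ℝ)

/-- Flip the spin at vertex `i`. -/
def flip (σ : Cfg N) (i : V N) : Cfg N := Function.update σ i (!σ i)

/-- Spin `i` is susceptible in `σ` if flipping it does not increase the energy. -/
def susceptible (h : ℝ) (σ : Cfg N) (i : V N) : Prop :=
  H N h (flip N σ i) ≤ H N h σ

lemma spin_not (b : Bool) : spin (!b) = - spin b := by cases b <;> simp [spin]

lemma ising_one_ne_zero (hN : 3 ≤ N) : (1 : ZMod N) ≠ 0 := by
  have : ((1:ℕ) : ZMod N) ≠ 0 := by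
    rw [Ne, ZMod.natCast_eq_zero_iff]
    intro hd; have := Nat.le_of_dvd one_pos hd; omega
  simpa using this

lemma ising_two_ne_zero (hN : 3 ≤ N) : (2 : ZMod N) ≠ 0 := by
  have : ((2:ℕ) : ZMod N) ≠ 0 := by
    rw [Ne, ZMod.natCast_eq_zero_iff]
    intro hd; have := Nat.le_of_dvd two_pos hd; omega
  simpa using this

lemma not_mem_nbr_self (hN : 3 ≤ N) (i : V N) : i ∉ nbrFinset N i := by
  have h1 := ising_one_ne_zero N hN
  simp [nbrFinset, Prod.ext_iff, h1, neg_eq_zero]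

lemma mem_nbr_symm (hN : 3 ≤ N) (i k : V N) : i ∈ nbrFinset N k ↔ k ∈ nbrFinset N i := by
  simp only [nbrFinset, Finset.mem_insert, Finset.mem_singleton]
  constructor <;> rintro (h|h|h|h) <;> subst h <;>
    simp [Prod.ext_iff, add_assoc]

lemma card_nbr (hN : 3 ≤ N) (i : V N) : (nbrFinset N i).card = 4 := by
  have h1 := ising_one_ne_zero N hN
  have h2 := ising_two_ne_zero N hN
  have h3 : (1 : ZMod N) ≠ -1 := by
    intro h
    apply h2
    have := congrArg (· + 1) h
    simpa [one_add_one_eq_two] using this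
  rw [nbrFinset]
  rw [Finset.card_insert_of_notMem, Finset.card_insert_of_notMem,
      Finset.card_insert_of_notMem, Finset.card_singleton] <;>
    simp [Prod.ext_iff, h1, h2, h3, neg_eq_zero, h3.symm] <;>
    constructor <;> intro h <;> simp_all [eq_neg_iff_add_eq_zero]

lemma H_flip_sub (hN : 3 ≤ N) (h : ℝ) (σ : Cfg N) (i : V N) :
    H N h (flip N σ i) - H N h σ
      = 2 * ((spin (σ i) : ℤ) : ℝ) * ((((∑ j ∈ nbrFinset N i, spin (σ j)) : ℤ) : ℝ) + h) := by
  have hii := not_mem_nbr_self N hN i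
  have hs' : ∀ j, j ≠ i → spin (flip N σ i j) = spin (σ j) := fun j hj => by
    simp [flip, Function.update_of_ne hj]
  have hs'i : spin (flip N σ i i) = - spin (σ i) := by simp [flip, spin_not]
  have hnb : ∀ k, i ∈ nbrFinset N k →
      (∑ j ∈ nbrFinset N k, spin (flip N σ i j))
        = (∑ j ∈ nbrFinset N k, spin (σ j)) - 2 * spin (σ i) := by
    intro k hk
    have h1 := (Finset.add_sum_erase _ (fun j => spin (flip N σ i j)) hk).symm
    have h2 := (Finset.add_sum_erase _ (fun j => spin (σ j)) hk).symm
    have h3 : ∑ j ∈ (nbrFinset N k).erase i, spin (flip N σ i j)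
        = ∑ j ∈ (nbrFinset N k).erase i, spin (σ j) :=
      Finset.sum_congr rfl fun j hj => hs' j (Finset.ne_of_mem_erase hj)
    rw [h1, h2, h3, hs'i]; ring
  have hmag : (∑ j : V N, spin (flip N σ i j)) = (∑ j : V N, spin (σ j)) - 2 * spin (σ i) := by
    have h1 := (Finset.add_sum_erase _ (fun j => spin (flip N σ i j)) (Finset.mem_univ i)).symm
    have h2 := (Finset.add_sum_erase _ (fun j => spin (σ j)) (Finset.mem_univ i)).symm
    have h3 : ∑ j ∈ Finset.univ.erase i, spin (flip N σ i j)
        = ∑ j ∈ Finset.univ.erase i, spin (σ j) :=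
      Finset.sum_congr rfl fun j hj => hs' j (Finset.ne_of_mem_erase hj)
    rw [h1, h2, h3, hs'i]; ring
  have hdouble : (∑ k : V N, ∑ j ∈ nbrFinset N k, spin (flip N σ i k) * spin (flip N σ i j))
      = (∑ k : V N, ∑ j ∈ nbrFinset N k, spin (σ k) * spin (σ j))
        - 4 * spin (σ i) * ∑ j ∈ nbrFinset N i, spin (σ j) := by
    set g : V N → ℤ := fun k => (∑ j ∈ nbrFinset N k, spin (flip N σ i k) * spin (flip N σ i j))
      - ∑ j ∈ nbrFinset N k, spin (σ k) * spin (σ j) with hg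
    have hsub : ∑ k : V N, g k = ∑ k ∈ insert i (nbrFinset N i), g k := by
      refine (Finset.sum_subset (Finset.subset_univ _) ?_).symm
      intro k _ hk
      simp only [Finset.mem_insert, not_or] at hk
      obtain ⟨hk1, hk2⟩ := hk
      have hik : i ∉ nbrFinset N k := fun hmem => hk2 ((mem_nbr_symm N hN i k).mp hmem)
      simp only [hg]
      rw [hs' k hk1,
        Finset.sum_congr rfl fun j hj => by rw [hs' j (fun hji => hik (hji ▸ hj))]]
      ring
    have hgi : g i = -2 * spin (σ i) * ∑ j ∈ nbrFinset N i, spin (σ j) := by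
      have h3 : ∑ j ∈ nbrFinset N i, spin (flip N σ i i) * spin (flip N σ i j)
          = (- spin (σ i)) * ∑ j ∈ nbrFinset N i, spin (σ j) := by
        rw [Finset.mul_sum]
        exact Finset.sum_congr rfl fun j hj => by
          rw [hs'i, hs' j (fun hji => hii (hji ▸ hj))]
      simp only [hg]
      rw [h3, ← Finset.mul_sum]
      ring
    have hgnbr : ∀ k ∈ nbrFinset N i, g k = -2 * spin (σ i) * spin (σ k) := by
      intro k hk
      have hki : k ≠ i := fun e => hii (e ▸ hk)
      have hik : i ∈ nbrFinset N k := (mem_nbr_symm N hN i k).mpr hk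
      have h3 : ∑ j ∈ nbrFinset N k, spin (flip N σ i k) * spin (flip N σ i j)
          = spin (σ k) * ((∑ j ∈ nbrFinset N k, spin (σ j)) - 2 * spin (σ i)) := by
        rw [← hnb k hik, Finset.mul_sum]
        exact Finset.sum_congr rfl fun j hj => by rw [hs' k hki]
      simp only [hg]
      rw [h3, ← Finset.mul_sum]
      ring
    have key : ∑ k : V N, g k
        = -4 * spin (σ i) * ∑ j ∈ nbrFinset N i, spin (σ j) := by
      rw [hsub, Finset.sum_insert hii, hgi, Finset.sum_congr rfl hgnbr, ← Finset.mul_sum]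
      ring
    have hsum : (∑ k : V N, g k)
        = (∑ k : V N, ∑ j ∈ nbrFinset N k, spin (flip N σ i k) * spin (flip N σ i j))
          - ∑ k : V N, ∑ j ∈ nbrFinset N k, spin (σ k) * spin (σ j) := by
      simp only [hg]
      rw [Finset.sum_sub_distrib]
    linarith [key, hsum]
  simp only [H]
  rw [hdouble, hmag]
  push_cast
  ring

/-- a +1 spin is susceptible iff it has at least 3 neighbors in state -1;
a -1 spin is susceptible iff it has at least 2 neighbors in state +1. -/
theorem susceptible_iff_neighbor_count (N : ℕ) [NeZero N] (hN : 3 ≤ N)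
    (h : ℝ) (hh0 : 0 < h) (hh1 : h < 1) (σ : Cfg N) (i : V N) :
    (σ i = true →
      (susceptible N h σ i ↔
        3 ≤ ((nbrFinset N i).filter (fun j => σ j = false)).card)) ∧
    (σ i = false →
      (susceptible N h σ i ↔
        2 ≤ ((nbrFinset N i).filter (fun j => σ j = true)).card)) := by
  have hkey : susceptible N h σ i ↔
      2 * ((spin (σ i) : ℤ) : ℝ) * ((((∑ j ∈ nbrFinset N i, spin (σ j)) : ℤ) : ℝ) + h) ≤ 0 := by
    rw [susceptible, ← sub_nonpos, H_flip_sub N hN h σ i]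
  set m : ℤ := ∑ j ∈ nbrFinset N i, spin (σ j) with hmdef
  set t : ℕ := ((nbrFinset N i).filter (fun j => σ j = true)).card with htdef
  set f : ℕ := ((nbrFinset N i).filter (fun j => σ j = false)).card with hfdef
  have hfc : (nbrFinset N i).filter (fun j => σ j = false)
      = (nbrFinset N i).filter (fun j => ¬ (σ j = true)) := by
    apply Finset.filter_congr; intro j _; simp
  have htf : t + f = 4 := by
    rw [htdef, hfdef, hfc, Finset.card_filter_add_card_filter_not, card_nbr N hN i]
  have hm : m = (t : ℤ) - (f : ℤ) := by
    rw [hmdef, ← Finset.sum_filter_add_sum_filter_not (nbrFinset N i) (fun j => σ j = true)]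
    have h1 : ∑ j ∈ (nbrFinset N i).filter (fun j => σ j = true), spin (σ j) = (t : ℤ) := by
      rw [Finset.sum_congr rfl (fun j hj => ?_), Finset.sum_const, nsmul_eq_mul, mul_one, htdef]
      have := (Finset.mem_filter.mp hj).2
      simp [spin, this]
    have h2 : ∑ j ∈ (nbrFinset N i).filter (fun j => ¬ (σ j = true)), spin (σ j)
        = -(f : ℤ) := by
      have hall : ∀ j ∈ (nbrFinset N i).filter (fun j => ¬ (σ j = true)),
          spin (σ j) = -1 := by
        intro j hj
        have := (Finset.mem_filter.mp hj).2
        simp only [Bool.not_eq_true] at this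
        simp [spin, this]
      rw [Finset.sum_congr rfl hall, Finset.sum_const, hfdef, hfc]
      simp
    rw [h1, h2]
    ring
  constructor
  · intro hσ
    rw [hkey]
    have hsi : spin (σ i) = 1 := by simp [spin, hσ]
    rw [hsi]
    push_cast
    constructor
    · intro hle
      have hmr : (m : ℝ) < 0 := by linarith
      have hm0 : m < 0 := by exact_mod_cast hmr
      omega
    · intro hf3
      have hm1 : m ≤ -1 := by omega
      have : (m : ℝ) ≤ -1 := by exact_mod_cast hm1
      linarith
  · intro hσ
    rw [hkey]
    have hsi : spin (σ i) = -1 := by simp [spin, hσ]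
    rw [hsi]
    push_cast
    constructor
    · intro hle
      have hmr : (-1 : ℝ) < (m : ℝ) := by linarith
      have hm0 : (-1 : ℤ) < m := by exact_mod_cast hmr
      omega
    · intro ht2
      have hm1 : 0 ≤ m := by omega
      have : (0 : ℝ) ≤ (m : ℝ) := by exact_mod_cast hm1
      linarith

end IsingS
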